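/- For every natural number n, one has f̄ (2n+2) = (f̄ (n+1))² + w₂ · (f̄ n)² in P. (Facts 4.7(c), reindexed to avoid n−1.) -/
import Mathlib


/- Context: `P = 𝔽₂[w₁,w₂]`, `f̄ 0 = 1`, `f̄ 1 = w₁`,
`f̄ (n+2) = w₁·f̄(n+1) + w₂·f̄ n`, and `J̄ n = ⟨f̄ (n+1), w₂·f̄ n⟩`. -/

noncomputable section

open MvPolynomial

abbrev P2 : Type := MvPolynomial (Fin 2) (ZMod 2)

def w₁ : P2 := X 0
def w₂ : P2 := X 1

def fbar : ℕ → P2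
  | 0 => 1
  | 1 => w₁
  | n + 2 => w₁ * fbar (n + 1) + w₂ * fbar n

def Jbar (n : ℕ) : Ideal P2 := Ideal.span {fbar (n + 1), w₂ * fbar n}

/- Statement 6 (Facts 4.7(c)): `f̄ (2n+2) = (f̄ (n+1))² + w₂ · (f̄ n)²`. -/
lemma fbar_add (m n : ℕ) :
    fbar (m + n + 2) = fbar (m + 1) * fbar (n + 1) + w₂ * fbar m * fbar n := by
  induction n using Nat.twoStepInduction with
  | zero => cases m with
    | zero => simp [fbar]; try ring
    | succ k => simp [fbar]; try ring
  | one => show fbar (m + 3) = _; simp [show m + 3 = m + 1 + 2 from rfl, fbar]; ring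
  | more k ih1 ih2 =>
    have h : m + (k + 2) + 2 = (m + k + 2) + 2 := by omega
    have e2 : fbar (k + 2) = w₁ * fbar (k + 1) + w₂ * fbar k := rfl
    have e3 : fbar (k + 3) = w₁ * fbar (k + 2) + w₂ * fbar (k + 1) := rfl
    rw [h, fbar, show m + k + 2 + 1 = m + (k+1) + 2 from by omega, ih2, ih1,
      show k + 2 + 1 = k + 3 from rfl, e3, e2]
    ring

theorem fbar_even_square (n : ℕ) :
    fbar (2 * n + 2) = (fbar (n + 1)) ^ 2 + w₂ * (fbar n) ^ 2 := by
  have := fbar_add n n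
  rw [show 2 * n + 2 = n + n + 2 from by omega, this]
  ring

end
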